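/- arXiv:2103.05750 — 4 statements merged into one kernel-verified Lean document; each statement's English description precedes it below -/
import Mathlib

section
/- Simplified projection step: let θ̂ ∈ ℝ^d and β > 0, and let Ṽ_t^{1/2} denote the positive-definite square root of Ṽ_t. Suppose the pair (θ̃, η̃) minimizes the function (θ', η) ↦ ‖g_t(θ') + β Ṽ_t^{1/2} η − g_t(θ̂)‖_{V_t^{-2}} over the set {(θ', η) ∈ ℝ^d × ℝ^d : ‖θ'‖₂ ≤ S and ‖η‖₂ ≤ 1}. Then there exists θ^p minimizing θ ↦ ‖g_t(θ) − g_t(θ̂)‖_{V_t^{-2}} over {θ ∈ ℝ^d : Θ ∩ E_β(θ) ≠ ∅} such that θ̃ ∈ Θ ∩ E_β(θ^p). -/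
open Finset Matrix

noncomputable section

/-- Euclidean norm of a vector in `ℝ^d`. -/
def vecEnorm {d : ℕ} (v : Fin d → ℝ) : ℝ := Real.sqrt (v ⬝ᵥ v)

/-- Norm ‖v‖_M = √(vᵀ M v) associated with a (positive definite) matrix M. -/
def mnorm {d : ℕ} (M : Matrix (Fin d) (Fin d) ℝ) (v : Fin d → ℝ) : ℝ :=
  Real.sqrt (v ⬝ᵥ M.mulVec v)

/-- The quasi-likelihood map g_t(θ) = Σ_{s=1}^{t-1} γ^{t-1-s} μ(⟨x_s,θ⟩) x_s + λ c_μ θ. -/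
def gmap {d : ℕ} (t : ℕ) (γ lam cmu : ℝ) (μ : ℝ → ℝ) (x : ℕ → Fin d → ℝ)
    (θ : Fin d → ℝ) : Fin d → ℝ :=
  (∑ s ∈ Finset.Icc 1 (t - 1), (γ ^ (t - 1 - s) * μ (x s ⬝ᵥ θ)) • x s) + (lam * cmu) • θ

/-- Weighted design matrix V_t = Σ_{s=1}^{t-1} γ^{t-1-s} x_s x_sᵀ + λ I_d. -/
def designV {d : ℕ} (t : ℕ) (γ lam : ℝ) (x : ℕ → Fin d → ℝ) : Matrix (Fin d) (Fin d) ℝ :=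
  (∑ s ∈ Finset.Icc 1 (t - 1), (γ ^ (t - 1 - s)) • vecMulVec (x s) (x s))
    + lam • (1 : Matrix (Fin d) (Fin d) ℝ)

/-- Weighted design matrix Ṽ_t = Σ_{s=1}^{t-1} γ^{2(t-1-s)} x_s x_sᵀ + λ I_d. -/
def designVtilde {d : ℕ} (t : ℕ) (γ lam : ℝ) (x : ℕ → Fin d → ℝ) : Matrix (Fin d) (Fin d) ℝ :=
  (∑ s ∈ Finset.Icc 1 (t - 1), (γ ^ (2 * (t - 1 - s))) • vecMulVec (x s) (x s))
    + lam • (1 : Matrix (Fin d) (Fin d) ℝ)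

/-! The map `g_t` is the gradient of the coercive convex potential
`θ ↦ ∑ₛ γ^(t-1-s) P(⟨x_s, θ⟩) + (λ c_μ / 2) ‖θ‖²`, `P` a primitive of `μ`. Subtracting `⟨y, θ⟩`
and minimising shows that `g_t` is onto, so `g_t(θ̃) + β Ṽ_t^{1/2} η̃ = g_t(θᵖ)` for some `θᵖ`.
Writing `Ṽ_t = W²`, the ball `‖u‖_{Ṽ_t⁻¹} ≤ β` is exactly the image `β W (unit ball)`, so `θ` is
feasible iff `g_t(θ) = g_t(θ') + β W η` with `θ' ∈ Θ`, `‖η‖ ≤ 1`, and the minimality of `(θ̃, η̃)`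
becomes the minimality of `θᵖ`. -/

open Filter MeasureTheory
open scoped RealInnerProductSpace

theorem Monotone.mul_sub_le_integral {μ : ℝ → ℝ} (hμ : Monotone μ) (a z : ℝ) :
    μ a * (z - a) ≤ ∫ u in a..z, μ u := by
  rcases le_total a z with haz | hza
  · simpa [mul_comm] using intervalIntegral.integral_mono_on haz intervalIntegrable_const
      (hμ.intervalIntegrable (μ := volume)) fun u hu => hμ hu.1
  · have := intervalIntegral.integral_mono_on hza (hμ.intervalIntegrable (μ := volume))
      intervalIntegrable_const fun u hu => hμ hu.2
    rw [intervalIntegral.integral_symm]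
    simp only [intervalIntegral.integral_const, smul_eq_mul] at this
    linarith

section Potential

variable {E ι : Type*} [NormedAddCommGroup E] [InnerProductSpace ℝ E]
  (s : Finset ι) (w : ι → ℝ) (v : ι → E) (μ : ℝ → ℝ) (c : ℝ)

def glmMap (θ : E) : E := ∑ i ∈ s, (w i * μ ⟪v i, θ⟫) • v i + c • θ

def glmPotential (y θ : E) : ℝ :=
  (∑ i ∈ s, w i * ∫ u in 0..⟪v i, θ⟫, μ u) + c / 2 * ‖θ‖ ^ 2 - ⟪y, θ⟫

variable {s w v μ c}

theorem hasFDerivAt_glmPotential (hμ : Continuous μ) (y θ : E) :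
    HasFDerivAt (glmPotential s w v μ c y) (innerSL ℝ (glmMap s w v μ c θ - y)) θ := by
  have hinner (z : E) : HasFDerivAt (fun θ => ⟪z, θ⟫) (innerSL ℝ z) θ :=
    (innerSL ℝ z).hasFDerivAt
  have hint (i : ι) : HasFDerivAt (fun θ => ∫ u in 0..⟪v i, θ⟫, μ u)
      (μ ⟪v i, θ⟫ • innerSL ℝ (v i)) θ :=
    (hμ.integral_hasStrictDerivAt 0 _).hasDerivAt.comp_hasFDerivAt θ (hinner (v i))
  refine (((HasFDerivAt.fun_sum (u := s) fun i _ => (hint i).const_mul (w i)).fun_add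
    ((hasStrictFDerivAt_norm_sq θ).hasFDerivAt.const_mul (c / 2))).fun_sub
      (hinner y)).congr_fderiv (ContinuousLinearMap.ext fun u => ?_)
  simp only [_root_.sub_apply, _root_.add_apply, _root_.sum_apply, _root_.smul_apply,
    coe_innerSL_apply, smul_eq_mul, glmMap, inner_sub_left, inner_add_left, sum_inner, real_inner_smul_left, nsmul_eq_mul, mul_assoc]
  ring

theorem le_glmPotential (hw : ∀ i ∈ s, 0 ≤ w i) (hμ : Monotone μ) (y θ : E) :
    c / 2 * ‖θ‖ ^ 2 + ⟪∑ i ∈ s, (w i * μ 0) • v i - y, θ⟫ ≤ glmPotential s w v μ c y θ := by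
  have hlin : ∑ i ∈ s, w i * (μ 0 * ⟪v i, θ⟫) ≤ ∑ i ∈ s, w i * ∫ u in 0..⟪v i, θ⟫, μ u :=
    Finset.sum_le_sum fun i hi => mul_le_mul_of_nonneg_left
      (by simpa using hμ.mul_sub_le_integral 0 ⟪v i, θ⟫) (hw i hi)
  simp only [glmPotential, inner_sub_left, sum_inner, real_inner_smul_left, mul_assoc]
  linarith

theorem tendsto_glmPotential_cocompact [FiniteDimensional ℝ E] (hw : ∀ i ∈ s, 0 ≤ w i)
    (hμ : Monotone μ) (hc : 0 < c) (y : E) :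
    Tendsto (glmPotential s w v μ c y) (cocompact E) atTop := by
  set a := ∑ i ∈ s, (w i * μ 0) • v i - y
  have hquad : Tendsto (fun r : ℝ => r * (c / 2 * r - ‖a‖)) atTop atTop :=
    tendsto_id.atTop_mul_atTop₀ <| tendsto_atTop_add_const_right _ _ <|
      (tendsto_const_mul_atTop_of_pos (by positivity)).mpr tendsto_id
  refine tendsto_atTop_mono (fun θ => ?_) (hquad.comp tendsto_norm_cocompact_atTop)
  calc ‖θ‖ * (c / 2 * ‖θ‖ - ‖a‖) = c / 2 * ‖θ‖ ^ 2 - ‖a‖ * ‖θ‖ := by ring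
    _ ≤ c / 2 * ‖θ‖ ^ 2 + ⟪a, θ⟫ := by linarith [neg_le_of_abs_le (abs_real_inner_le_norm a θ)]
    _ ≤ glmPotential s w v μ c y θ := le_glmPotential hw hμ y θ

theorem glmMap_surjective [FiniteDimensional ℝ E] (hw : ∀ i ∈ s, 0 ≤ w i)
    (hμ : Continuous μ) (hμm : Monotone μ) (hc : 0 < c) :
    Function.Surjective (glmMap s w v μ c) := by
  intro y
  have hF := hasFDerivAt_glmPotential (s := s) (w := w) (v := v) (c := c) hμ y
  obtain ⟨θ, hθ⟩ := (continuous_iff_continuousAt.2 fun θ => (hF θ).continuousAt).exists_forall_le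
    (tendsto_glmPotential_cocompact hw hμm hc y)
  have hzero := IsLocalMin.hasFDerivAt_eq_zero (Filter.Eventually.of_forall hθ) (hF θ)
  refine ⟨θ, sub_eq_zero.1 ((inner_self_eq_zero (𝕜 := ℝ)).1 ?_)⟩
  simpa only [innerSL_apply_apply, _root_.zero_apply]
    using DFunLike.congr_fun hzero (glmMap s w v μ c θ - y)

end Potential

theorem gmap_ofLp {d : ℕ} (t : ℕ) (γ lam cmu : ℝ) (μ : ℝ → ℝ) (x : ℕ → Fin d → ℝ)
    (θ : EuclideanSpace ℝ (Fin d)) :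
    gmap t γ lam cmu μ x (WithLp.ofLp θ) = WithLp.ofLp (glmMap (Finset.Icc 1 (t - 1))
      (fun s => γ ^ (t - 1 - s)) (fun s => WithLp.toLp 2 (x s)) μ (lam * cmu) θ) := by
  simp [gmap, glmMap, EuclideanSpace.inner_eq_star_dotProduct, dotProduct_comm]

theorem gmap_surjective {d : ℕ} (t : ℕ) {γ lam cmu : ℝ} {μ : ℝ → ℝ} (x : ℕ → Fin d → ℝ)
    (hγ : 0 ≤ γ) (hc : 0 < lam * cmu) (hμ : Continuous μ) (hμm : Monotone μ) :
    Function.Surjective (gmap t γ lam cmu μ x) := by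
  intro y
  obtain ⟨θ, hθ⟩ := glmMap_surjective (fun s _ => pow_nonneg hγ (t - 1 - s))
    (v := fun s => WithLp.toLp 2 (x s)) hμ hμm hc (WithLp.toLp 2 y)
  exact ⟨WithLp.ofLp θ, by rw [gmap_ofLp, hθ]⟩

section EllipsoidNorm

variable {d : ℕ}

theorem vecEnorm_smul (a : ℝ) (v : Fin d → ℝ) : vecEnorm (a • v) = |a| * vecEnorm v := by
  rw [vecEnorm, vecEnorm, smul_dotProduct, dotProduct_smul, smul_eq_mul, smul_eq_mul, ← mul_assoc,
    ← sq, Real.sqrt_mul (sq_nonneg a), Real.sqrt_sq_eq_abs]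

theorem mnorm_sub_comm (M : Matrix (Fin d) (Fin d) ℝ) (u v : Fin d → ℝ) :
    mnorm M (u - v) = mnorm M (v - u) := by
  rw [mnorm, mnorm, ← neg_sub v u, mulVec_neg, neg_dotProduct, dotProduct_neg, neg_neg]

theorem mnorm_inv_mul_self {W : Matrix (Fin d) (Fin d) ℝ} (hW : W.IsSymm) (u : Fin d → ℝ) :
    mnorm (W * W)⁻¹ u = vecEnorm (W⁻¹ *ᵥ u) := by
  rw [mnorm, vecEnorm, Matrix.mul_inv_rev, ← mulVec_mulVec, dotProduct_mulVec, ← vecMul_transpose,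
    hW.inv.eq]

theorem mnorm_inv_mul_self_le_iff {W : Matrix (Fin d) (Fin d) ℝ} (hW : W.IsSymm)
    (hdet : IsUnit W.det) {β : ℝ} (hβ : 0 < β) (u : Fin d → ℝ) :
    mnorm (W * W)⁻¹ u ≤ β ↔ ∃ η, vecEnorm η ≤ 1 ∧ β • W *ᵥ η = u := by
  rw [mnorm_inv_mul_self hW]
  constructor
  · intro hu
    refine ⟨β⁻¹ • W⁻¹ *ᵥ u, ?_, ?_⟩
    · rw [vecEnorm_smul, abs_of_pos (inv_pos.2 hβ)]
      exact inv_mul_le_one_of_le₀ hu hβ.le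
    · rw [mulVec_smul, mulVec_mulVec, mul_nonsing_inv W hdet, one_mulVec, smul_smul,
        mul_inv_cancel₀ hβ.ne', one_smul]
  · rintro ⟨η, hη, rfl⟩
    rw [mulVec_smul, mulVec_mulVec, nonsing_inv_mul W hdet, one_mulVec, vecEnorm_smul,
      abs_of_pos hβ]
    exact mul_le_of_le_one_right hβ.le hη

end EllipsoidNorm

theorem stmt_1_general {d t : ℕ}
    (S lam γ : ℝ) (hlam : 0 < lam)
    (hγ : γ ∈ Set.Ioo (0 : ℝ) 1)
    (x : ℕ → Fin d → ℝ)
    (μ : ℝ → ℝ) (hμc : ContDiff ℝ 1 μ) (hμm : StrictMono μ)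
    (cmu : ℝ)
    (hcmupos : 0 < cmu)
    (β : ℝ) (hβ : 0 < β) (θhat : Fin d → ℝ)
    (W : Matrix (Fin d) (Fin d) ℝ) (hW : W.PosDef)
    (hWsq : W * W = designVtilde t γ lam x)
    (θtilde ηtilde : Fin d → ℝ)
    (hmemθ : vecEnorm θtilde ≤ S) (hmemη : vecEnorm ηtilde ≤ 1)
    (hmin : ∀ θ' η : Fin d → ℝ, vecEnorm θ' ≤ S → vecEnorm η ≤ 1 →
      mnorm (designV t γ lam x * designV t γ lam x)⁻¹
          (gmap t γ lam cmu μ x θtilde + β • W.mulVec ηtilde - gmap t γ lam cmu μ x θhat)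
        ≤ mnorm (designV t γ lam x * designV t γ lam x)⁻¹
            (gmap t γ lam cmu μ x θ' + β • W.mulVec η - gmap t γ lam cmu μ x θhat)) :
    ∃ θp : Fin d → ℝ,
      -- θp is feasible for the projection program (P1)
      (∃ θ' : Fin d → ℝ, vecEnorm θ' ≤ S ∧
        mnorm (designVtilde t γ lam x)⁻¹
          (gmap t γ lam cmu μ x θ' - gmap t γ lam cmu μ x θp) ≤ β)
      -- θp minimizes θ ↦ ‖g_t(θ) - g_t(θ̂)‖_{V_t^{-2}} over the feasible set
      ∧ (∀ θ : Fin d → ℝ,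
          (∃ θ' : Fin d → ℝ, vecEnorm θ' ≤ S ∧
            mnorm (designVtilde t γ lam x)⁻¹
              (gmap t γ lam cmu μ x θ' - gmap t γ lam cmu μ x θ) ≤ β) →
          mnorm (designV t γ lam x * designV t γ lam x)⁻¹
              (gmap t γ lam cmu μ x θp - gmap t γ lam cmu μ x θhat)
            ≤ mnorm (designV t γ lam x * designV t γ lam x)⁻¹
                (gmap t γ lam cmu μ x θ - gmap t γ lam cmu μ x θhat))
      -- and θ̃ ∈ Θ ∩ E_β(θp)
      ∧ vecEnorm θtilde ≤ S
      ∧ mnorm (designVtilde t γ lam x)⁻¹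
          (gmap t γ lam cmu μ x θtilde - gmap t γ lam cmu μ x θp) ≤ β := by
  obtain ⟨θp, hθp⟩ := gmap_surjective t x hγ.1.le (mul_pos hlam hcmupos) hμc.continuous
    hμm.monotone (gmap t γ lam cmu μ x θtilde + β • W *ᵥ ηtilde)
  set g := gmap t γ lam cmu μ x
  have hball := mnorm_inv_mul_self_le_iff (isHermitian_iff_isSymm.1 hW.isHermitian)
    hW.det_pos.ne'.isUnit hβ
  rw [← hWsq]
  have hfeas : mnorm (W * W)⁻¹ (g θtilde - g θp) ≤ β := by
    rw [mnorm_sub_comm, hball]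
    exact ⟨ηtilde, hmemη, by rw [hθp, add_sub_cancel_left]⟩
  refine ⟨θp, ⟨θtilde, hmemθ, hfeas⟩, ?_, hmemθ, hfeas⟩
  rintro θ ⟨θ', hθ'S, hθ'β⟩
  obtain ⟨η, hη, hηθ⟩ := (hball _).1 (by rwa [mnorm_sub_comm] at hθ'β)
  have := hmin θ' η hθ'S hη
  rwa [← hθp, hηθ, add_sub_cancel] at this

/-- Simplified projection step (Proposition 1). -/
theorem stmt_1 {d t : ℕ} (hd : 1 ≤ d) (ht : 2 ≤ t)
    (L S lam γ : ℝ) (hL : 0 < L) (hS : 0 < S) (hlam : 0 < lam)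
    (hγ : γ ∈ Set.Ioo (0 : ℝ) 1)
    (x : ℕ → Fin d → ℝ) (hx : ∀ s ∈ Finset.Icc 1 (t - 1), vecEnorm (x s) ≤ L)
    (μ : ℝ → ℝ) (hμc : ContDiff ℝ 1 μ) (hμm : StrictMono μ)
    (kmu cmu : ℝ)
    (hkmu : kmu = sSup (deriv μ '' Set.Icc (-(L * S)) (L * S)))
    (hcmu : cmu = sInf (deriv μ '' Set.Icc (-(L * S)) (L * S)))
    (hcmupos : 0 < cmu)
    (β : ℝ) (hβ : 0 < β) (θhat : Fin d → ℝ)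
    (W : Matrix (Fin d) (Fin d) ℝ) (hW : W.PosDef)
    (hWsq : W * W = designVtilde t γ lam x)
    (θtilde ηtilde : Fin d → ℝ)
    (hmemθ : vecEnorm θtilde ≤ S) (hmemη : vecEnorm ηtilde ≤ 1)
    (hmin : ∀ θ' η : Fin d → ℝ, vecEnorm θ' ≤ S → vecEnorm η ≤ 1 →
      mnorm (designV t γ lam x * designV t γ lam x)⁻¹
          (gmap t γ lam cmu μ x θtilde + β • W.mulVec ηtilde - gmap t γ lam cmu μ x θhat)
        ≤ mnorm (designV t γ lam x * designV t γ lam x)⁻¹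
            (gmap t γ lam cmu μ x θ' + β • W.mulVec η - gmap t γ lam cmu μ x θhat)) :
    ∃ θp : Fin d → ℝ,
      -- θp is feasible for the projection program (P1)
      (∃ θ' : Fin d → ℝ, vecEnorm θ' ≤ S ∧
        mnorm (designVtilde t γ lam x)⁻¹
          (gmap t γ lam cmu μ x θ' - gmap t γ lam cmu μ x θp) ≤ β)
      -- θp minimizes θ ↦ ‖g_t(θ) - g_t(θ̂)‖_{V_t^{-2}} over the feasible set
      ∧ (∀ θ : Fin d → ℝ,
          (∃ θ' : Fin d → ℝ, vecEnorm θ' ≤ S ∧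
            mnorm (designVtilde t γ lam x)⁻¹
              (gmap t γ lam cmu μ x θ' - gmap t γ lam cmu μ x θ) ≤ β) →
          mnorm (designV t γ lam x * designV t γ lam x)⁻¹
              (gmap t γ lam cmu μ x θp - gmap t γ lam cmu μ x θhat)
            ≤ mnorm (designV t γ lam x * designV t γ lam x)⁻¹
                (gmap t γ lam cmu μ x θ - gmap t γ lam cmu μ x θhat))
      -- and θ̃ ∈ Θ ∩ E_β(θp)
      ∧ vecEnorm θtilde ≤ S
      ∧ mnorm (designVtilde t γ lam x)⁻¹
          (gmap t γ lam cmu μ x θtilde - gmap t γ lam cmu μ x θp) ≤ β :=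
  stmt_1_general S lam γ hlam hγ x μ hμc hμm cmu hcmupos β hβ θhat W hW hWsq θtilde ηtilde hmemθ
    hmemη hmin
end
end

section
/- Tracking lemma with orthogonal action sets: assume every x_s is a scalar multiple of a vector of a fixed orthonormal basis (e_1,…,e_d) of ℝ^d. Let θ*_1, …, θ*_t ∈ Θ and let θ̄ ∈ ℝ^d satisfy g_t(θ̄) = Σ_{s=1}^{t-1} γ^{t-1-s} μ(⟨x_s, θ*_s⟩) x_s + λ c_μ θ*_t. Then for every integer D with 1 ≤ D ≤ t−1, ‖g_t(θ̄) − g_t(θ*_t)‖_{V_t^{-2}} ≤ (2 k_μ L² S / λ) · γ^D/(1 − γ) + k_μ Σ_{s=t−D}^{t−1} ‖θ*_s − θ*_{s+1}‖₂. -/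
open Finset Matrix

noncomputable section

/-- Euclidean norm of a vector in `ℝ^d`. -/
def euclNorm {d : ℕ} (v : Fin d → ℝ) : ℝ := Real.sqrt (v ⬝ᵥ v)

/-! Every `x s` is a multiple of some `e j`, so the design matrix `V_t` is diagonal in the
orthonormal basis `e`, with eigenvalues `κ i = ∑ s, γ^(t-1-s) (x s ⬝ᵥ e i)^2 + λ ≥ λ`, and
`‖w‖_{V_t⁻²}` is the Euclidean norm of the coordinates `(e i ⬝ᵥ w) / κ i`.
Here `w = g_t(θ̄) - g_t(θ*_t) = ∑ s, γ^(t-1-s) Δ_s x_s` with `|Δ_s| ≤ k_μ |x s ⬝ᵥ (θ*_s - θ*_t)|`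
by the mean value theorem; split the sum at `t - D`. For the stale terms, `|Δ_s| ‖x_s‖ ≤ 2 k_μ L² S`
and `κ i ≥ λ` leave a geometric tail. A recent term only touches the coordinate `i` of `x_s`,
where `|e i ⬝ᵥ (θ*_s - θ*_t)|` is at most the sum of the drifts `|e i ⬝ᵥ (θ*_r - θ*_{r+1})|`, and
its weight `γ^(t-1-s) (x s ⬝ᵥ e i)^2` is absorbed by `κ i`. -/

variable {d : ℕ}

lemma euclNorm_eq_norm (v : Fin d → ℝ) : euclNorm v = ‖WithLp.toLp 2 v‖ := by
  rw [EuclideanSpace.norm_eq, euclNorm, dotProduct]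
  simp [sq]

lemma euclNorm_nonneg (v : Fin d → ℝ) : 0 ≤ euclNorm v := Real.sqrt_nonneg _

lemma euclNorm_add_le (u v : Fin d → ℝ) : euclNorm (u + v) ≤ euclNorm u + euclNorm v := by
  simpa only [euclNorm_eq_norm, WithLp.toLp_add] using norm_add_le _ _

lemma euclNorm_sub_le (u v : Fin d → ℝ) : euclNorm (u - v) ≤ euclNorm u + euclNorm v := by
  simpa only [euclNorm_eq_norm, WithLp.toLp_sub] using norm_sub_le _ _

lemma euclNorm_sum_le {ι : Type*} (s : Finset ι) (f : ι → Fin d → ℝ) :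
    euclNorm (∑ i ∈ s, f i) ≤ ∑ i ∈ s, euclNorm (f i) := by
  simpa only [euclNorm_eq_norm, WithLp.toLp_sum] using norm_sum_le _ _

lemma euclNorm_smul (c : ℝ) (v : Fin d → ℝ) : euclNorm (c • v) = |c| * euclNorm v := by
  simp only [euclNorm_eq_norm, WithLp.toLp_smul, norm_smul, Real.norm_eq_abs]

lemma abs_dotProduct_le (u v : Fin d → ℝ) : |u ⬝ᵥ v| ≤ euclNorm u * euclNorm v := by
  simpa [euclNorm_eq_norm, EuclideanSpace.inner_eq_star_dotProduct, dotProduct_comm]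
    using abs_real_inner_le_norm (WithLp.toLp 2 u) (WithLp.toLp 2 v)

lemma euclNorm_le_of_abs_le {u v : Fin d → ℝ} (h : ∀ i, |u i| ≤ |v i|) :
    euclNorm u ≤ euclNorm v :=
  Real.sqrt_le_sqrt <| sum_le_sum fun i _ => by
    simpa only [abs_mul_abs_self] using mul_self_le_mul_self (abs_nonneg _) (h i)

lemma euclNorm_add_div_le (u v κ : Fin d → ℝ) :
    euclNorm ((u + v) / κ) ≤ euclNorm (u / κ) + euclNorm (v / κ) := by
  rw [show (u + v) / κ = u / κ + v / κ from funext fun i => add_div (u i) (v i) (κ i)]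
  exact euclNorm_add_le _ _

lemma abs_sub_le_sSup_deriv_mul {f : ℝ → ℝ} (hf : ContDiff ℝ 1 f) (hmono : Monotone f)
    {a b p q : ℝ} (hp : p ∈ Set.Icc a b) (hq : q ∈ Set.Icc a b) :
    |f p - f q| ≤ sSup (deriv f '' Set.Icc a b) * |p - q| := by
  have hbdd : BddAbove (deriv f '' Set.Icc a b) :=
    (isCompact_Icc.image (hf.continuous_deriv le_rfl)).bddAbove
  simpa only [Real.norm_eq_abs] using (convex_Icc a b).norm_image_sub_le_of_norm_deriv_le
    (fun z _ => hf.differentiable one_ne_zero z)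
    (fun z hz => (abs_of_nonneg hmono.deriv_nonneg).trans_le (le_csSup hbdd ⟨z, hz, rfl⟩)) hq hp

lemma sSup_deriv_nonneg {f : ℝ → ℝ} (hf : ContDiff ℝ 1 f) (hmono : Monotone f) {a b : ℝ}
    (hab : a ≤ b) : 0 ≤ sSup (deriv f '' Set.Icc a b) :=
  hmono.deriv_nonneg.trans <|
    le_csSup (isCompact_Icc.image (hf.continuous_deriv le_rfl)).bddAbove
      ⟨a, Set.left_mem_Icc.mpr hab, rfl⟩

lemma abs_sub_comp_dotProduct_le {f : ℝ → ℝ} (hf : ContDiff ℝ 1 f) (hmono : Monotone f)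
    {L S : ℝ} {x θ θ' : Fin d → ℝ} (hx : euclNorm x ≤ L) (hθ : euclNorm θ ≤ S)
    (hθ' : euclNorm θ' ≤ S) :
    |f (x ⬝ᵥ θ) - f (x ⬝ᵥ θ')|
      ≤ sSup (deriv f '' Set.Icc (-(L * S)) (L * S)) * |x ⬝ᵥ (θ - θ')| := by
  have hmem : ∀ {v}, euclNorm v ≤ S → x ⬝ᵥ v ∈ Set.Icc (-(L * S)) (L * S) := fun hv =>
    abs_le.mp <| (abs_dotProduct_le _ _).trans <|
      mul_le_mul hx hv (euclNorm_nonneg _) ((euclNorm_nonneg _).trans hx)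
  rw [dotProduct_sub]
  exact abs_sub_le_sSup_deriv_mul hf hmono (hmem hθ) (hmem hθ')

lemma sum_Icc_pow_sub_le {γ : ℝ} (hγ0 : 0 ≤ γ) (hγ1 : γ < 1) {n D : ℕ} (hD : D ≤ n) :
    ∑ s ∈ Icc 1 (n - D), γ ^ (n - s) ≤ γ ^ D / (1 - γ) := by
  rw [← Ico_add_one_right_eq_Icc, sum_Ico_reflect _ _ (by omega),
    show n + 1 - (n - D + 1) = D by omega, show n + 1 - 1 = n by omega]
  exact geom_sum_Ico_le_of_lt_one hγ0 hγ1

lemma sum_Icc_eq_add {M : Type*} [AddCommMonoid M] (f : ℕ → M) {t D : ℕ} (hD : 1 ≤ D)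
    (hDt : D ≤ t - 1) :
    ∑ s ∈ Icc 1 (t - 1), f s = ∑ s ∈ Icc 1 (t - 1 - D), f s + ∑ s ∈ Icc (t - D) (t - 1), f s := by
  rw [← sum_union (disjoint_left.mpr fun s h1 h2 => by simp only [mem_Icc] at h1 h2; omega)]
  congr 1
  ext s
  simp only [mem_union, mem_Icc]
  omega

lemma abs_dotProduct_sub_le_sum (v : Fin d → ℝ) (θ : ℕ → Fin d → ℝ) {m s n : ℕ}
    (hms : m ≤ s) (hsn : s ≤ n) :
    |v ⬝ᵥ (θ s - θ n)| ≤ ∑ r ∈ Icc m (n - 1), |v ⬝ᵥ (θ r - θ (r + 1))| := by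
  have htel : θ s - θ n = ∑ r ∈ Ico s n, (θ r - θ (r + 1)) := by
    rw [← neg_sub, ← sum_Ico_sub θ hsn, ← sum_neg_distrib]
    simp only [neg_sub]
  rw [htel, dotProduct_sum]
  refine (abs_sum_le_sum_abs _ _).trans <|
    sum_le_sum_of_subset_of_nonneg (fun r hr => ?_) fun _ _ _ => abs_nonneg _
  simp only [mem_Ico, mem_Icc] at hr ⊢
  omega

section Orthonormal

variable {e : Fin d → Fin d → ℝ}

lemma mul_transpose_of_orthonormal (he : ∀ i j, e i ⬝ᵥ e j = if i = j then (1 : ℝ) else 0) :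
    of e * (of e)ᵀ = 1 := by
  ext i j
  simpa [mul_apply, one_apply, dotProduct] using he i j

lemma transpose_mul_of_orthonormal (he : ∀ i j, e i ⬝ᵥ e j = if i = j then (1 : ℝ) else 0) :
    (of e)ᵀ * of e = 1 :=
  mul_eq_one_comm.mp (mul_transpose_of_orthonormal he)

lemma euclNorm_mulVec_of_orthonormal (he : ∀ i j, e i ⬝ᵥ e j = if i = j then (1 : ℝ) else 0)
    (v : Fin d → ℝ) : euclNorm (of e *ᵥ v) = euclNorm v := by
  rw [euclNorm, euclNorm, dotProduct_mulVec, ← mulVec_transpose, mulVec_mulVec,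
    transpose_mul_of_orthonormal he, one_mulVec]

lemma dotProduct_inv_mulVec_of_eigen (he : ∀ i j, e i ⬝ᵥ e j = if i = j then (1 : ℝ) else 0)
    {M : Matrix (Fin d) (Fin d) ℝ} {κ : Fin d → ℝ} (hκ : ∀ i, κ i ≠ 0)
    (hM : ∀ i, M *ᵥ e i = κ i • e i) (w : Fin d → ℝ) :
    w ⬝ᵥ (M⁻¹ *ᵥ w) = ∑ i, (e i ⬝ᵥ w) ^ 2 / κ i := by
  have hMQ : M * (of e)ᵀ = (of e)ᵀ * diagonal κ := by
    ext j i
    rw [mul_diagonal]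
    simpa [mul_apply, mulVec, dotProduct, mul_comm] using congrFun (hM i) j
  have hinv : M⁻¹ = (of e)ᵀ * diagonal κ⁻¹ * of e := by
    refine inv_eq_right_inv ?_
    have hκκ : diagonal κ * diagonal κ⁻¹ = 1 := by
      rw [diagonal_mul_diagonal, ← diagonal_one]
      exact congrArg diagonal (funext fun i => mul_inv_cancel₀ (hκ i))
    calc M * ((of e)ᵀ * diagonal κ⁻¹ * of e)
        = (M * (of e)ᵀ) * diagonal κ⁻¹ * of e := by simp only [Matrix.mul_assoc]
      _ = 1 := by
        rw [hMQ, Matrix.mul_assoc _ (diagonal κ), hκκ, Matrix.mul_one,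
          transpose_mul_of_orthonormal he]
  rw [hinv, ← mulVec_mulVec, ← mulVec_mulVec, dotProduct_mulVec, vecMul_transpose]
  refine sum_congr rfl fun i _ => ?_
  rw [mulVec_diagonal, Pi.inv_apply]
  change (e i ⬝ᵥ w) * ((κ i)⁻¹ * (e i ⬝ᵥ w)) = _
  ring

lemma smul_eq_sq_smul_of_eq_smul (he : ∀ i j, e i ⬝ᵥ e j = if i = j then (1 : ℝ) else 0)
    {v : Fin d → ℝ} (hv : ∃ (c : ℝ) (j : Fin d), v = c • e j) (i : Fin d) :
    (v ⬝ᵥ e i) • v = (v ⬝ᵥ e i) ^ 2 • e i := by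
  obtain ⟨c, j, rfl⟩ := hv
  by_cases hji : j = i
  · subst hji
    simp [he, smul_smul, sq]
  · simp [he, hji]

lemma dotProduct_mul_dotProduct_of_eq_smul
    (he : ∀ i j, e i ⬝ᵥ e j = if i = j then (1 : ℝ) else 0)
    {v : Fin d → ℝ} (hv : ∃ (c : ℝ) (j : Fin d), v = c • e j) (i : Fin d) (u : Fin d → ℝ) :
    (v ⬝ᵥ e i) * (v ⬝ᵥ u) = (v ⬝ᵥ e i) ^ 2 * (e i ⬝ᵥ u) := by
  simpa only [smul_dotProduct, smul_eq_mul] using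
    congrArg (· ⬝ᵥ u) (smul_eq_sq_smul_of_eq_smul he hv i)

lemma designV_mulVec_of_orthogonal (he : ∀ i j, e i ⬝ᵥ e j = if i = j then (1 : ℝ) else 0)
    {t : ℕ} {γ lam : ℝ} {x : ℕ → Fin d → ℝ}
    (hortho : ∀ s ∈ Icc 1 (t - 1), ∃ (c : ℝ) (j : Fin d), x s = c • e j) (i : Fin d) :
    designV t γ lam x *ᵥ e i
      = (∑ s ∈ Icc 1 (t - 1), γ ^ (t - 1 - s) * (x s ⬝ᵥ e i) ^ 2 + lam) • e i := by
  rw [designV, add_mulVec, sum_mulVec, smul_mulVec, one_mulVec, add_smul, sum_smul]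
  congr 1
  refine sum_congr rfl fun s hs => ?_
  rw [smul_mulVec, vecMulVec_mulVec, op_smul_eq_smul, smul_eq_sq_smul_of_eq_smul he (hortho s hs),
    smul_smul]

lemma mnorm_inv_designV_sq_of_orthogonal
    (he : ∀ i j, e i ⬝ᵥ e j = if i = j then (1 : ℝ) else 0)
    {t : ℕ} {γ lam : ℝ} {x : ℕ → Fin d → ℝ}
    (hortho : ∀ s ∈ Icc 1 (t - 1), ∃ (c : ℝ) (j : Fin d), x s = c • e j)
    (hγ : 0 ≤ γ) (hlam : 0 < lam) (w : Fin d → ℝ) :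
    mnorm (designV t γ lam x * designV t γ lam x)⁻¹ w
      = euclNorm (of e *ᵥ w
          / fun i => ∑ s ∈ Icc 1 (t - 1), γ ^ (t - 1 - s) * (x s ⬝ᵥ e i) ^ 2 + lam) := by
  set κ : Fin d → ℝ := fun i => ∑ s ∈ Icc 1 (t - 1), γ ^ (t - 1 - s) * (x s ⬝ᵥ e i) ^ 2 + lam
  have hκ : ∀ i, 0 < κ i := fun i =>
    add_pos_of_nonneg_of_pos (sum_nonneg fun s _ => by positivity) hlam
  have hV := designV_mulVec_of_orthogonal (γ := γ) (lam := lam) he hortho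
  have hVV : ∀ i, (designV t γ lam x * designV t γ lam x) *ᵥ e i = κ i ^ 2 • e i := fun i => by
    rw [← mulVec_mulVec, hV, mulVec_smul, hV, smul_smul, sq]
  rw [mnorm, dotProduct_inv_mulVec_of_eigen he (fun i => (pow_pos (hκ i) 2).ne') hVV, euclNorm]
  refine congrArg Real.sqrt (sum_congr rfl fun i _ => ?_)
  rw [← div_pow, sq]
  rfl

lemma euclNorm_mulVec_div_le (he : ∀ i j, e i ⬝ᵥ e j = if i = j then (1 : ℝ) else 0)
    {κ : Fin d → ℝ} {c : ℝ} (hc : 0 < c) (hκ : ∀ i, c ≤ κ i) (w : Fin d → ℝ) :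
    euclNorm (of e *ᵥ w / κ) ≤ euclNorm w / c :=
  calc euclNorm (of e *ᵥ w / κ)
      ≤ euclNorm (c⁻¹ • of e *ᵥ w) := euclNorm_le_of_abs_le fun i => by
        rw [Pi.div_apply, Pi.smul_apply, smul_eq_mul, abs_div, abs_mul, abs_inv,
          abs_of_pos hc, abs_of_pos (hc.trans_le (hκ i)), inv_mul_eq_div]
        exact div_le_div_of_nonneg_left (abs_nonneg _) hc (hκ i)
    _ = euclNorm w / c := by
        rw [euclNorm_smul, euclNorm_mulVec_of_orthonormal he, abs_inv, abs_of_pos hc,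
          inv_mul_eq_div]

lemma euclNorm_stale_terms_le (he : ∀ i j, e i ⬝ᵥ e j = if i = j then (1 : ℝ) else 0)
    {n D : ℕ} (hD : D ≤ n) {γ lam k L B : ℝ} (hγ0 : 0 ≤ γ) (hγ1 : γ < 1) (hlam : 0 < lam)
    {κ : Fin d → ℝ} (hκ : ∀ i, lam ≤ κ i) {x δ : ℕ → Fin d → ℝ} {Δ : ℕ → ℝ}
    (hk : 0 ≤ k) (hB : 0 ≤ B) (hΔ : ∀ s ∈ Icc 1 (n - D), |Δ s| ≤ k * |x s ⬝ᵥ δ s|)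
    (hx : ∀ s ∈ Icc 1 (n - D), euclNorm (x s) ≤ L)
    (hδ : ∀ s ∈ Icc 1 (n - D), euclNorm (δ s) ≤ B) :
    euclNorm (of e *ᵥ (∑ s ∈ Icc 1 (n - D), (γ ^ (n - s) * Δ s) • x s) / κ)
      ≤ k * L ^ 2 * B / lam * (γ ^ D / (1 - γ)) :=
  calc _ ≤ euclNorm (∑ s ∈ Icc 1 (n - D), (γ ^ (n - s) * Δ s) • x s) / lam :=
        euclNorm_mulVec_div_le he hlam hκ _
    _ ≤ (∑ s ∈ Icc 1 (n - D), γ ^ (n - s) * (k * L ^ 2 * B)) / lam := by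
        gcongr
        refine (euclNorm_sum_le _ _).trans (sum_le_sum fun s hs => ?_)
        rw [euclNorm_smul, abs_mul, abs_of_nonneg (pow_nonneg hγ0 _), mul_assoc]
        refine mul_le_mul_of_nonneg_left ?_ (pow_nonneg hγ0 _)
        have hL : 0 ≤ L := (euclNorm_nonneg _).trans (hx s hs)
        calc |Δ s| * euclNorm (x s)
            ≤ k * (euclNorm (x s) * euclNorm (δ s)) * euclNorm (x s) :=
              mul_le_mul_of_nonneg_right
                ((hΔ s hs).trans (mul_le_mul_of_nonneg_left (abs_dotProduct_le _ _) hk))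
                (euclNorm_nonneg _)
          _ ≤ k * (L * B) * L :=
              mul_le_mul (mul_le_mul_of_nonneg_left
                (mul_le_mul (hx s hs) (hδ s hs) (euclNorm_nonneg _) hL) hk) (hx s hs)
                (euclNorm_nonneg _) (mul_nonneg hk (mul_nonneg hL hB))
          _ = k * L ^ 2 * B := by ring
    _ = k * L ^ 2 * B / lam * ∑ s ∈ Icc 1 (n - D), γ ^ (n - s) := by
        rw [← sum_mul]
        ring
    _ ≤ k * L ^ 2 * B / lam * (γ ^ D / (1 - γ)) := by
        gcongr
        exact sum_Icc_pow_sub_le hγ0 hγ1 hD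

lemma abs_dotProduct_sum_div_le (he : ∀ i j, e i ⬝ᵥ e j = if i = j then (1 : ℝ) else 0)
    {ι : Type*} {T : Finset ι} {ω Δ : ι → ℝ} {x δ : ι → Fin d → ℝ} {k b κ : ℝ} (i : Fin d)
    (hortho : ∀ s ∈ T, ∃ (c : ℝ) (j : Fin d), x s = c • e j) (hω : ∀ s ∈ T, 0 ≤ ω s)
    (hk : 0 ≤ k) (hb : 0 ≤ b) (hΔ : ∀ s ∈ T, |Δ s| ≤ k * |x s ⬝ᵥ δ s|)
    (hδ : ∀ s ∈ T, |e i ⬝ᵥ δ s| ≤ b) (hκ0 : 0 < κ)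
    (hκ : ∑ s ∈ T, ω s * (x s ⬝ᵥ e i) ^ 2 ≤ κ) :
    |(e i ⬝ᵥ ∑ s ∈ T, (ω s * Δ s) • x s) / κ| ≤ k * b := by
  rw [abs_div, abs_of_pos hκ0, div_le_iff₀ hκ0, dotProduct_sum]
  calc |∑ s ∈ T, e i ⬝ᵥ (ω s * Δ s) • x s|
      ≤ ∑ s ∈ T, ω s * (k * ((x s ⬝ᵥ e i) ^ 2 * b)) := by
        refine (abs_sum_le_sum_abs _ _).trans (sum_le_sum fun s hs => ?_)
        rw [dotProduct_smul, smul_eq_mul, abs_mul, abs_mul, abs_of_nonneg (hω s hs), mul_assoc,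
          dotProduct_comm]
        refine mul_le_mul_of_nonneg_left ?_ (hω s hs)
        calc |Δ s| * |x s ⬝ᵥ e i| ≤ k * |x s ⬝ᵥ δ s| * |x s ⬝ᵥ e i| := by gcongr; exact hΔ s hs
          _ = k * ((x s ⬝ᵥ e i) ^ 2 * |e i ⬝ᵥ δ s|) := by
            rw [mul_assoc, ← abs_mul, mul_comm (x s ⬝ᵥ δ s),
              dotProduct_mul_dotProduct_of_eq_smul he (hortho s hs), abs_mul, abs_sq]
          _ ≤ k * ((x s ⬝ᵥ e i) ^ 2 * b) := by gcongr; exact hδ s hs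
    _ = k * b * ∑ s ∈ T, ω s * (x s ⬝ᵥ e i) ^ 2 := by
        rw [mul_sum]
        exact sum_congr rfl fun s _ => by ring
    _ ≤ k * b * κ := by gcongr

lemma euclNorm_recent_terms_le (he : ∀ i j, e i ⬝ᵥ e j = if i = j then (1 : ℝ) else 0)
    {ι ι' : Type*} {T : Finset ι} {R : Finset ι'} {ω Δ : ι → ℝ} {x δ : ι → Fin d → ℝ}
    {η : ι' → Fin d → ℝ} {k : ℝ} {κ : Fin d → ℝ}
    (hortho : ∀ s ∈ T, ∃ (c : ℝ) (j : Fin d), x s = c • e j) (hω : ∀ s ∈ T, 0 ≤ ω s)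
    (hk : 0 ≤ k) (hΔ : ∀ s ∈ T, |Δ s| ≤ k * |x s ⬝ᵥ δ s|)
    (hδ : ∀ s ∈ T, ∀ i, |e i ⬝ᵥ δ s| ≤ ∑ r ∈ R, |e i ⬝ᵥ η r|) (hκ0 : ∀ i, 0 < κ i)
    (hκ : ∀ i, ∑ s ∈ T, ω s * (x s ⬝ᵥ e i) ^ 2 ≤ κ i) :
    euclNorm (of e *ᵥ (∑ s ∈ T, (ω s * Δ s) • x s) / κ) ≤ k * ∑ r ∈ R, euclNorm (η r) :=
  calc _ ≤ euclNorm (k • ∑ r ∈ R, fun i => |e i ⬝ᵥ η r|) := euclNorm_le_of_abs_le fun i => by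
        refine (abs_dotProduct_sum_div_le he i hortho hω hk (sum_nonneg fun _ _ => abs_nonneg _)
          hΔ (fun s hs => hδ s hs i) (hκ0 i) (hκ i)).trans (le_of_eq_of_le ?_ (le_abs_self _))
        simp only [Pi.smul_apply, Finset.sum_apply, smul_eq_mul]
    _ ≤ k * ∑ r ∈ R, euclNorm (fun i => |e i ⬝ᵥ η r|) := by
        rw [euclNorm_smul, abs_of_nonneg hk]
        gcongr
        exact euclNorm_sum_le _ _
    _ ≤ k * ∑ r ∈ R, euclNorm (η r) := by
        gcongr with r
        rw [← euclNorm_mulVec_of_orthonormal he (η r)]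
        exact euclNorm_le_of_abs_le fun i => (abs_abs _).le

end Orthonormal

lemma sub_gmap_eq {t : ℕ} {γ lam cmu : ℝ} {μ : ℝ → ℝ} {x : ℕ → Fin d → ℝ}
    (θ : ℕ → Fin d → ℝ) (θ' : Fin d → ℝ) :
    (∑ s ∈ Icc 1 (t - 1), (γ ^ (t - 1 - s) * μ (x s ⬝ᵥ θ s)) • x s) + (lam * cmu) • θ'
        - gmap t γ lam cmu μ x θ'
      = ∑ s ∈ Icc 1 (t - 1), (γ ^ (t - 1 - s) * (μ (x s ⬝ᵥ θ s) - μ (x s ⬝ᵥ θ'))) • x s := by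
  rw [gmap, add_sub_add_right_eq_sub, ← sum_sub_distrib]
  simp only [mul_sub, sub_smul]

theorem stmt_3_general {d t : ℕ}
    (L S lam γ : ℝ) (hL : 0 < L) (hS : 0 < S) (hlam : 0 < lam)
    (hγ : γ ∈ Set.Ioo (0 : ℝ) 1)
    (x : ℕ → Fin d → ℝ) (hx : ∀ s ∈ Finset.Icc 1 (t - 1), euclNorm (x s) ≤ L)
    (μ : ℝ → ℝ) (hμc : ContDiff ℝ 1 μ) (hμm : StrictMono μ)
    (kmu cmu : ℝ)
    (hkmu : kmu = sSup (deriv μ '' Set.Icc (-(L * S)) (L * S)))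
    (e : Fin d → Fin d → ℝ)
    (he : ∀ i j : Fin d, e i ⬝ᵥ e j = if i = j then (1 : ℝ) else 0)
    (hortho : ∀ s ∈ Finset.Icc 1 (t - 1), ∃ (c : ℝ) (i : Fin d), x s = c • e i)
    (θstar : ℕ → Fin d → ℝ) (hθstar : ∀ s ∈ Finset.Icc 1 t, euclNorm (θstar s) ≤ S)
    (θbar : Fin d → ℝ)
    (hθbar : gmap t γ lam cmu μ x θbar
      = (∑ s ∈ Finset.Icc 1 (t - 1), (γ ^ (t - 1 - s) * μ (x s ⬝ᵥ θstar s)) • x s)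
        + (lam * cmu) • θstar t) :
    ∀ D : ℕ, 1 ≤ D → D ≤ t - 1 →
      mnorm (designV t γ lam x * designV t γ lam x)⁻¹
          (gmap t γ lam cmu μ x θbar - gmap t γ lam cmu μ x (θstar t))
        ≤ (2 * kmu * L ^ 2 * S / lam) * (γ ^ D / (1 - γ))
          + kmu * ∑ s ∈ Finset.Icc (t - D) (t - 1), euclNorm (θstar s - θstar (s + 1)) := by
  intro D hD1 hD2
  obtain ⟨hγ0, hγ1⟩ := hγ
  have hk : 0 ≤ kmu := hkmu ▸ sSup_deriv_nonneg hμc hμm.monotone (neg_le_self (by positivity))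
  have hθ : ∀ s ∈ Icc 1 (t - 1), euclNorm (θstar s) ≤ S := fun s hs =>
    hθstar s (Icc_subset_Icc_right (Nat.sub_le t 1) hs)
  have hθt : euclNorm (θstar t) ≤ S := hθstar t (right_mem_Icc.mpr (by omega))
  have hΔ : ∀ s ∈ Icc 1 (t - 1), |μ (x s ⬝ᵥ θstar s) - μ (x s ⬝ᵥ θstar t)|
      ≤ kmu * |x s ⬝ᵥ (θstar s - θstar t)| := fun s hs =>
    hkmu ▸ abs_sub_comp_dotProduct_le hμc hμm.monotone (hx s hs) (hθ s hs) hθt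
  rw [mnorm_inv_designV_sq_of_orthogonal he hortho hγ0.le hlam, hθbar, sub_gmap_eq,
    sum_Icc_eq_add _ hD1 hD2, mulVec_add]
  have hsq_nonneg : ∀ {i}, 0 ≤ ∑ s ∈ Icc 1 (t - 1), γ ^ (t - 1 - s) * (x s ⬝ᵥ e i) ^ 2 :=
    sum_nonneg fun s _ => by positivity
  have hstale : Icc 1 (t - 1 - D) ⊆ Icc 1 (t - 1) := Icc_subset_Icc_right (by omega)
  have hrecent : Icc (t - D) (t - 1) ⊆ Icc 1 (t - 1) := Icc_subset_Icc_left (by omega)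
  refine (euclNorm_add_div_le _ _ _).trans (add_le_add ?_ ?_)
  · calc _ ≤ kmu * L ^ 2 * (2 * S) / lam * (γ ^ D / (1 - γ)) :=
          euclNorm_stale_terms_le he hD2 hγ0.le hγ1 hlam
            (fun _ => le_add_of_nonneg_left hsq_nonneg) hk (by positivity)
            (fun s hs => hΔ s (hstale hs)) (fun s hs => hx s (hstale hs))
            fun s hs => (euclNorm_sub_le _ _).trans (by linarith [hθ s (hstale hs)])
      _ = _ := by ring
  · exact euclNorm_recent_terms_le he (fun s hs => hortho s (hrecent hs))
      (fun s _ => by positivity) hk (fun s hs => hΔ s (hrecent hs))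
      (fun s hs i => abs_dotProduct_sub_le_sum (e i) θstar (mem_Icc.mp hs).1
        ((mem_Icc.mp hs).2.trans (Nat.sub_le t 1)))
      (fun _ => add_pos_of_nonneg_of_pos hsq_nonneg hlam)
      fun _ => (sum_le_sum_of_subset_of_nonneg hrecent fun s _ _ => by positivity).trans
        (le_add_of_nonneg_right hlam.le)

/-- Tracking lemma with orthogonal action sets. -/
theorem stmt_3 {d t : ℕ} (hd : 1 ≤ d) (ht : 2 ≤ t)
    (L S lam γ : ℝ) (hL : 0 < L) (hS : 0 < S) (hlam : 0 < lam)
    (hγ : γ ∈ Set.Ioo (0 : ℝ) 1)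
    (x : ℕ → Fin d → ℝ) (hx : ∀ s ∈ Finset.Icc 1 (t - 1), euclNorm (x s) ≤ L)
    (μ : ℝ → ℝ) (hμc : ContDiff ℝ 1 μ) (hμm : StrictMono μ)
    (kmu cmu : ℝ)
    (hkmu : kmu = sSup (deriv μ '' Set.Icc (-(L * S)) (L * S)))
    (hcmu : cmu = sInf (deriv μ '' Set.Icc (-(L * S)) (L * S)))
    (hcmupos : 0 < cmu)
    (e : Fin d → Fin d → ℝ)
    (he : ∀ i j : Fin d, e i ⬝ᵥ e j = if i = j then (1 : ℝ) else 0)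
    (hortho : ∀ s ∈ Finset.Icc 1 (t - 1), ∃ (c : ℝ) (i : Fin d), x s = c • e i)
    (θstar : ℕ → Fin d → ℝ) (hθstar : ∀ s ∈ Finset.Icc 1 t, euclNorm (θstar s) ≤ S)
    (θbar : Fin d → ℝ)
    (hθbar : gmap t γ lam cmu μ x θbar
      = (∑ s ∈ Finset.Icc 1 (t - 1), (γ ^ (t - 1 - s) * μ (x s ⬝ᵥ θstar s)) • x s)
        + (lam * cmu) • θstar t) :
    ∀ D : ℕ, 1 ≤ D → D ≤ t - 1 →
      mnorm (designV t γ lam x * designV t γ lam x)⁻¹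
          (gmap t γ lam cmu μ x θbar - gmap t γ lam cmu μ x (θstar t))
        ≤ (2 * kmu * L ^ 2 * S / lam) * (γ ^ D / (1 - γ))
          + kmu * ∑ s ∈ Finset.Icc (t - D) (t - 1), euclNorm (θstar s - θstar (s + 1)) :=
  stmt_3_general L S lam γ hL hS hlam hγ x hx μ hμc hμm kmu cmu hkmu e he hortho θstar hθstar θbar
    hθbar
end
end

section
/- Weighted elliptical potential lemma: let {x_s}_{s=1}^{T} be a sequence in ℝ^d with ‖x_s‖₂ ≤ L for all s, let λ > 0 and γ ∈ (0,1), and for t ≥ 1 define V_t = Σ_{s=1}^{t-1} γ^{t-1-s} x_s x_sᵀ + λ I_d. Then Σ_{t=1}^{T} ‖x_t‖²_{V_t^{-1}} ≤ 2 max(1, L²/λ) · ( d T log(1/γ) + log( det(V_{T+1}) / λ^d ) ). -/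
open Finset Matrix

noncomputable section

/-- Euclidean norm of a vector in `ℝ^d`. -/
def enorm {d : ℕ} (v : Fin d → ℝ) : ℝ := Real.sqrt (v ⬝ᵥ v)

open Real

/-!
Write `w_t = ‖x_t‖²_{V_t⁻¹}`. Since `V_{t+1} = γ V_t + x_t x_tᵀ + (1 - γ) λ I`, and adding a
nonnegative multiple of the identity to a positive semidefinite matrix does not decrease its
determinant, the matrix determinant lemma gives
`det V_{t+1} ≥ γ^d det V_t (1 + w_t / γ) ≥ γ^d det V_t (1 + w_t)`.
Taking logarithms and telescoping from `det V_1 = λ^d` bounds `∑_{t ≤ T} log (1 + w_t)` by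
`d T log (1/γ) + log (det V_{T+1} / λ^d)`. Finally `V_t ⪰ λ I` gives `w_t ≤ ‖x_t‖² / λ ≤ L² / λ`,
and `w ≤ 2 max(1, c) log (1 + w)` for `0 ≤ w ≤ c`.
-/

namespace Matrix

theorem PosSemidef.posDef_of_sub_smul_one {n : Type*} [DecidableEq n] {V : Matrix n n ℝ} {lam : ℝ}
    (hlam : 0 < lam) (hV : (V - lam • 1).PosSemidef) : V.PosDef := by
  simpa using PosDef.posSemidef_add hV (PosDef.one.smul hlam)

variable {n : Type*} [Fintype n] [DecidableEq n]

theorem det_add_vecMulVec {α : Type*} [CommRing α] {B : Matrix n n α} (hB : IsUnit B.det)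
    (u v : n → α) : (B + vecMulVec u v).det = B.det * (1 + v ⬝ᵥ B⁻¹ *ᵥ u) := by
  rw [vecMulVec_eq Unit, det_add_replicateCol_mul_replicateRow hB,
    det_unique (1 + replicateRow Unit v * B⁻¹ * replicateCol Unit u), add_apply,
    one_apply_eq, ← replicateRow_vecMul, replicateRow_mul_replicateCol_apply,
    ← dotProduct_mulVec]

theorem det_conjStarAlgAut {𝕜 : Type*} [RCLike 𝕜] (U : unitaryGroup n 𝕜) (X : Matrix n n 𝕜) :
    (Unitary.conjStarAlgAut 𝕜 _ U X).det = X.det := by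
  have hU : (U : Matrix n n 𝕜) * star (U : Matrix n n 𝕜) = 1 := Unitary.mul_star_self_of_mem U.2
  rw [Unitary.conjStarAlgAut_apply, det_mul, det_mul, mul_right_comm, ← det_mul, hU, det_one,
    one_mul]

theorem PosSemidef.det_le_det_add_smul_one {S : Matrix n n ℝ} (hS : S.PosSemidef) {c : ℝ}
    (hc : 0 ≤ c) : S.det ≤ (S + c • 1).det := by
  set e := Unitary.conjStarAlgAut ℝ (Matrix n n ℝ) hS.1.eigenvectorUnitary
  set ev := hS.1.eigenvalues
  have hspec : S = e (diagonal ev) := hS.1.spectral_theorem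
  have hshift : S + c • 1 = e (diagonal fun i => ev i + c) := by
    rw [← diagonal_add, ← smul_one_eq_diagonal, map_add, map_smul, map_one, ← hspec]
  rw [hshift, congrArg det hspec, det_conjStarAlgAut, det_conjStarAlgAut, det_diagonal,
    det_diagonal]
  exact prod_le_prod (fun i _ => hS.eigenvalues_nonneg i) fun i _ => by linarith

theorem PosSemidef.dotProduct_inv_mulVec_le_div {V : Matrix n n ℝ} {lam : ℝ} (hlam : 0 < lam)
    (hV : (V - lam • 1).PosSemidef) (v : n → ℝ) : v ⬝ᵥ V⁻¹ *ᵥ v ≤ (v ⬝ᵥ v) / lam := by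
  have hVpd : V.PosDef := hV.posDef_of_sub_smul_one hlam
  set y := V⁻¹ *ᵥ v
  have hVy : V *ᵥ y = v := by
    rw [mulVec_mulVec, mul_nonsing_inv _ hVpd.det_pos.ne'.isUnit, one_mulVec]
  have hquad : lam * (y ⬝ᵥ y) ≤ v ⬝ᵥ y := by
    have := hV.dotProduct_mulVec_nonneg y
    simp only [sub_mulVec, smul_mulVec, one_mulVec, dotProduct_sub, dotProduct_smul, smul_eq_mul,
      star_trivial, hVy, dotProduct_comm y v] at this
    linarith
  -- expand `0 ≤ |v - λ y|²` and use `λ² |y|² ≤ λ (v ⬝ᵥ y)`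
  have hsq : 0 ≤ (v - lam • y) ⬝ᵥ (v - lam • y) := dotProduct_self_star_nonneg _
  simp only [sub_dotProduct, dotProduct_sub, smul_dotProduct, dotProduct_smul, smul_eq_mul,
    dotProduct_comm y v] at hsq
  have := mul_le_mul_of_nonneg_left hquad hlam.le
  rw [le_div_iff₀ hlam]
  linarith

end Matrix

theorem le_two_mul_max_mul_log_one_add {w c : ℝ} (hw : 0 ≤ w) (hwc : w ≤ c) :
    w ≤ 2 * max 1 c * log (1 + w) := by
  have hM : 1 + w ≤ 2 * max 1 c := by linarith [le_max_left 1 c, le_max_right 1 c]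
  have hw1 : 0 < 1 + w := by linarith
  calc w = 2 * max 1 c * (w / (2 * max 1 c)) := by field_simp
    _ ≤ 2 * max 1 c * (w / (1 + w)) := by gcongr
    _ = 2 * max 1 c * (1 - (1 + w)⁻¹) := by field_simp; ring
    _ ≤ 2 * max 1 c * log (1 + w) := by gcongr; exact one_sub_inv_le_log_of_pos hw1

theorem mnorm_sq {n : ℕ} {M : Matrix (Fin n) (Fin n) ℝ} (hM : M.PosSemidef) (v : Fin n → ℝ) :
    mnorm M v ^ 2 = v ⬝ᵥ M *ᵥ v :=
  Real.sq_sqrt (hM.dotProduct_mulVec_nonneg v)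

theorem dotProduct_self_le_sq_of_enorm_le {n : ℕ} {v : Fin n → ℝ} {L : ℝ}
    (hv : _root_.enorm v ≤ L) : v ⬝ᵥ v ≤ L ^ 2 := by
  have hvv : 0 ≤ v ⬝ᵥ v := dotProduct_self_star_nonneg v
  rw [← Real.sq_sqrt hvv]
  exact pow_le_pow_left₀ (Real.sqrt_nonneg _) hv 2

section designV

variable {d : ℕ} {γ lam : ℝ} (x : ℕ → Fin d → ℝ)

theorem posSemidef_designV_sub_smul_one (hγ : 0 ≤ γ) (t : ℕ) :
    (designV t γ lam x - lam • 1).PosSemidef := by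
  rw [designV, add_sub_cancel_right]
  exact posSemidef_sum _ fun s _ =>
    (posSemidef_vecMulVec_self_star (x s)).smul (pow_nonneg hγ _)

theorem posDef_designV (hγ : 0 ≤ γ) (hlam : 0 < lam) (t : ℕ) : (designV t γ lam x).PosDef :=
  (posSemidef_designV_sub_smul_one x hγ t).posDef_of_sub_smul_one hlam

theorem designV_one : designV 1 γ lam x = lam • 1 := by
  simp [designV]

theorem designV_succ {t : ℕ} (ht : 1 ≤ t) :
    designV (t + 1) γ lam x
      = γ • designV t γ lam x + vecMulVec (x t) (x t) + ((1 - γ) * lam) • 1 := by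
  obtain ⟨u, rfl⟩ := Nat.exists_eq_add_of_le' ht
  simp only [designV, Nat.add_sub_cancel, sum_Icc_succ_top (Nat.le_add_left 1 u), Nat.sub_self,
    pow_zero, one_smul, smul_add, smul_sum, smul_smul]
  have hpow : ∀ s ∈ Icc 1 u, γ ^ (u + 1 - s) = γ * γ ^ (u - s) := fun s hs => by
    rw [← pow_succ', Nat.sub_add_comm (mem_Icc.mp hs).2]
  rw [sum_congr rfl fun s hs => by rw [hpow s hs]]
  module

theorem pow_mul_det_designV_mul_le_det_designV_succ (hγ0 : 0 < γ) (hγ1 : γ ≤ 1) (hlam : 0 < lam)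
    {t : ℕ} (ht : 1 ≤ t) :
    γ ^ d * (designV t γ lam x).det * (1 + x t ⬝ᵥ (designV t γ lam x)⁻¹ *ᵥ x t)
      ≤ (designV (t + 1) γ lam x).det := by
  set V := designV t γ lam x
  set w := x t ⬝ᵥ V⁻¹ *ᵥ x t
  have hV : V.PosDef := posDef_designV x hγ0.le hlam t
  have hw : 0 ≤ w := hV.inv.posSemidef.dotProduct_mulVec_nonneg (x t)
  have hrank1 : (γ • V + vecMulVec (x t) (x t)).det = γ ^ d * V.det * (1 + γ⁻¹ * w) := by
    have : γ • V + vecMulVec (x t) (x t) = γ • (V + vecMulVec (γ⁻¹ • x t) (x t)) := by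
      rw [smul_add, smul_vecMulVec, smul_inv_smul₀ hγ0.ne']
    rw [this, det_smul, Fintype.card_fin, det_add_vecMulVec hV.det_pos.ne'.isUnit, mulVec_smul,
      dotProduct_smul, smul_eq_mul, mul_assoc]
  have hshift : 0 ≤ (1 - γ) * lam := mul_nonneg (by linarith) hlam.le
  calc γ ^ d * V.det * (1 + w) ≤ γ ^ d * V.det * (1 + γ⁻¹ * w) := by
        gcongr
        · exact mul_nonneg (pow_pos hγ0 d).le hV.det_pos.le
        · exact le_mul_of_one_le_left hw (one_le_inv₀ hγ0 |>.mpr hγ1)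
    _ = (γ • V + vecMulVec (x t) (x t)).det := hrank1.symm
    _ ≤ (γ • V + vecMulVec (x t) (x t) + ((1 - γ) * lam) • 1).det :=
        PosSemidef.det_le_det_add_smul_one
          ((hV.smul hγ0).posSemidef.add (posSemidef_vecMulVec_self_star (x t))) hshift
    _ = (designV (t + 1) γ lam x).det := by rw [designV_succ x ht]

theorem log_one_add_le_log_det_designV_succ_sub (hγ0 : 0 < γ) (hγ1 : γ ≤ 1) (hlam : 0 < lam)
    {t : ℕ} (ht : 1 ≤ t) :
    log (1 + x t ⬝ᵥ (designV t γ lam x)⁻¹ *ᵥ x t)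
      ≤ d * log (1 / γ) + (log (designV (t + 1) γ lam x).det - log (designV t γ lam x).det) := by
  have hV := posDef_designV x hγ0.le hlam t
  have hdet := hV.det_pos
  have hw : 0 ≤ x t ⬝ᵥ (designV t γ lam x)⁻¹ *ᵥ x t :=
    hV.inv.posSemidef.dotProduct_mulVec_nonneg (x t)
  have h :=
    log_le_log (by positivity) (pow_mul_det_designV_mul_le_det_designV_succ x hγ0 hγ1 hlam ht)
  rw [log_mul (by positivity) (by linarith), log_mul (by positivity) hdet.ne', log_pow] at h
  rw [one_div, log_inv]
  linarith

theorem sum_log_one_add_le_log_det_designV (hγ0 : 0 < γ) (hγ1 : γ ≤ 1) (hlam : 0 < lam) (T : ℕ) :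
    ∑ t ∈ Icc 1 T, log (1 + x t ⬝ᵥ (designV t γ lam x)⁻¹ *ᵥ x t)
      ≤ d * T * log (1 / γ) + log ((designV (T + 1) γ lam x).det / lam ^ d) := by
  induction T with
  | zero => simp [designV_one]
  | succ T ih =>
    rw [sum_Icc_succ_top (Nat.le_add_left 1 T)]
    have hstep := log_one_add_le_log_det_designV_succ_sub x hγ0 hγ1 hlam (Nat.le_add_left 1 T)
    have hpos := fun t => (posDef_designV x hγ0.le hlam t).det_pos
    rw [log_div (hpos _).ne' (by positivity)] at ih ⊢
    push_cast
    linarith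

end designV

theorem stmt_9_general {d T : ℕ}
    (L lam γ : ℝ) (hlam : 0 < lam) (hγ : γ ∈ Set.Ioo (0 : ℝ) 1)
    (x : ℕ → Fin d → ℝ) (hx : ∀ s ∈ Finset.Icc 1 T, _root_.enorm (x s) ≤ L) :
    ∑ t ∈ Finset.Icc 1 T, (mnorm (designV t γ lam x)⁻¹ (x t)) ^ 2
      ≤ 2 * max 1 (L ^ 2 / lam)
        * ((d : ℝ) * T * Real.log (1 / γ)
          + Real.log ((designV (T + 1) γ lam x).det / lam ^ d)) := by
  obtain ⟨hγ0, hγ1⟩ := hγ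
  have hVinv t : (designV t γ lam x)⁻¹.PosSemidef :=
    (posDef_designV x hγ0.le hlam t).inv.posSemidef
  have hw_le t (ht : t ∈ Icc 1 T) : x t ⬝ᵥ (designV t γ lam x)⁻¹ *ᵥ x t ≤ L ^ 2 / lam :=
    calc _ ≤ (x t ⬝ᵥ x t) / lam :=
          (posSemidef_designV_sub_smul_one x hγ0.le t).dotProduct_inv_mulVec_le_div hlam (x t)
      _ ≤ L ^ 2 / lam := by gcongr; exact dotProduct_self_le_sq_of_enorm_le (hx t ht)
  calc ∑ t ∈ Icc 1 T, mnorm (designV t γ lam x)⁻¹ (x t) ^ 2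
      = ∑ t ∈ Icc 1 T, x t ⬝ᵥ (designV t γ lam x)⁻¹ *ᵥ x t :=
        sum_congr rfl fun t _ => mnorm_sq (hVinv t) (x t)
    _ ≤ ∑ t ∈ Icc 1 T,
          2 * max 1 (L ^ 2 / lam) * log (1 + x t ⬝ᵥ (designV t γ lam x)⁻¹ *ᵥ x t) :=
        sum_le_sum fun t ht => le_two_mul_max_mul_log_one_add
          ((hVinv t).dotProduct_mulVec_nonneg (x t)) (hw_le t ht)
    _ = 2 * max 1 (L ^ 2 / lam)
          * ∑ t ∈ Icc 1 T, log (1 + x t ⬝ᵥ (designV t γ lam x)⁻¹ *ᵥ x t) :=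
        (mul_sum _ _ _).symm
    _ ≤ _ := by
        gcongr
        exact sum_log_one_add_le_log_det_designV x hγ0 hγ1.le hlam T

/-- Weighted elliptical potential lemma. -/
theorem stmt_9 {d T : ℕ} (hd : 1 ≤ d) (hT : 1 ≤ T)
    (L lam γ : ℝ) (hL : 0 < L) (hlam : 0 < lam) (hγ : γ ∈ Set.Ioo (0 : ℝ) 1)
    (x : ℕ → Fin d → ℝ) (hx : ∀ s ∈ Finset.Icc 1 T, _root_.enorm (x s) ≤ L) :
    ∑ t ∈ Finset.Icc 1 T, (mnorm (designV t γ lam x)⁻¹ (x t)) ^ 2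
      ≤ 2 * max 1 (L ^ 2 / lam)
        * ((d : ℝ) * T * Real.log (1 / γ)
          + Real.log ((designV (T + 1) γ lam x).det / lam ^ d)) :=
  stmt_9_general L lam γ hlam hγ x hx
end
end

section
/- Bijectivity of the quasi-likelihood map: let μ : ℝ → ℝ be continuous and strictly increasing, let γ ∈ (0,1), λ > 0, c_μ > 0, and let x_1, …, x_{t-1} ∈ ℝ^d. Then the function g_t : ℝ^d → ℝ^d defined by g_t(θ) = Σ_{s=1}^{t-1} γ^{t-1-s} μ(⟨x_s, θ⟩) x_s + λ c_μ θ is a bijection of ℝ^d onto ℝ^d. -/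
open Finset Matrix

noncomputable section

/-! With `M` a primitive of `μ`, the map `g θ = Σ cᵢ μ⟪xᵢ, θ⟫ xᵢ + k θ` is the gradient of
`Φ θ = Σ cᵢ M⟪xᵢ, θ⟫ + k/2 ‖θ‖²`. Monotonicity of `μ` makes it strongly monotone,
`⟪g a - g b, a - b⟫ ≥ k ‖a - b‖²`, hence injective. Since `M u ≥ μ 0 * u`, the function
`Φ - ⟪y, ·⟫` grows quadratically, so it attains a minimum, where its gradient `g - y` vanishes. -/

open Filter
open scoped RealInnerProductSpace

theorem mul_le_intervalIntegral_of_monotone {μ : ℝ → ℝ} (hμc : Continuous μ) (hμm : Monotone μ)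
    (u : ℝ) : μ 0 * u ≤ ∫ v in (0 : ℝ)..u, μ v := by
  rcases le_total 0 u with hu | hu
  · have h := intervalIntegral.integral_mono_on (μ := MeasureTheory.volume) hu
      (continuous_const.intervalIntegrable 0 u) (hμc.intervalIntegrable 0 u) fun v hv => hμm hv.1
    simpa [mul_comm] using h
  · have h := intervalIntegral.integral_mono_on (μ := MeasureTheory.volume) hu
      (hμc.intervalIntegrable u 0) (continuous_const.intervalIntegrable u 0) fun v hv => hμm hv.2
    rw [intervalIntegral.integral_const, smul_eq_mul] at h
    rw [intervalIntegral.integral_symm]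
    linarith

theorem tendsto_cocompact_atTop_of_quadratic_le {E : Type*} [NormedAddCommGroup E] [ProperSpace E]
    {f : E → ℝ} {a b : ℝ} (ha : 0 < a) (hf : ∀ θ, a * ‖θ‖ ^ 2 - b * ‖θ‖ ≤ f θ) :
    Tendsto f (cocompact E) atTop := by
  have hquad : Tendsto (fun r : ℝ => r * (a * r - b)) atTop atTop :=
    tendsto_id.atTop_mul_atTop₀ <| tendsto_atTop_add_const_right _ _ (tendsto_id.const_mul_atTop ha)
  refine tendsto_atTop_mono (fun θ => le_trans (le_of_eq ?_) (hf θ))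
    (hquad.comp tendsto_norm_cocompact_atTop)
  simp only [Function.comp_apply]
  ring

theorem exists_hasFDerivAt_eq_zero_of_tendsto_cocompact {E : Type*} [NormedAddCommGroup E]
    [NormedSpace ℝ E] [ProperSpace E] {f : E → ℝ} {f' : E → E →L[ℝ] ℝ}
    (hf : ∀ θ, HasFDerivAt f (f' θ) θ) (hcoer : Tendsto f (cocompact E) atTop) :
    ∃ θ, f' θ = 0 := by
  obtain ⟨θ, hθ⟩ :=
    (continuous_iff_continuousAt.2 fun θ => (hf θ).continuousAt).exists_forall_le hcoer
  exact ⟨θ, IsLocalMin.hasFDerivAt_eq_zero (Eventually.of_forall hθ) (hf θ)⟩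

section QuasiLikelihood

variable {E ι : Type*} [NormedAddCommGroup E] [InnerProductSpace ℝ E]
  (s : Finset ι) (c : ι → ℝ) (μ : ℝ → ℝ) (x : ι → E) (k : ℝ)

def quasiLikelihood (θ : E) : E :=
  (∑ i ∈ s, (c i * μ ⟪x i, θ⟫) • x i) + k • θ

def quasiLikelihoodPotential (θ : E) : ℝ :=
  (∑ i ∈ s, c i * ∫ v in (0 : ℝ)..⟪x i, θ⟫, μ v) + k / 2 * ‖θ‖ ^ 2

variable {s c μ x k}

theorem inner_quasiLikelihood_sub_quasiLikelihood (a b : E) :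
    ⟪quasiLikelihood s c μ x k a - quasiLikelihood s c μ x k b, a - b⟫ =
      (∑ i ∈ s, c i * ((μ ⟪x i, a⟫ - μ ⟪x i, b⟫) * (⟪x i, a⟫ - ⟪x i, b⟫))) + k * ‖a - b‖ ^ 2 := by
  have hdiff : quasiLikelihood s c μ x k a - quasiLikelihood s c μ x k b =
      (∑ i ∈ s, (c i * (μ ⟪x i, a⟫ - μ ⟪x i, b⟫)) • x i) + k • (a - b) := by
    simp only [quasiLikelihood, mul_sub, sub_smul, Finset.sum_sub_distrib, smul_sub]
    abel
  rw [hdiff, inner_add_left, sum_inner, real_inner_smul_left, real_inner_self_eq_norm_sq]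
  congr 1
  refine Finset.sum_congr rfl fun i _ => ?_
  rw [real_inner_smul_left, inner_sub_right, mul_assoc]

theorem mul_norm_sub_sq_le_inner_quasiLikelihood_sub (hc : ∀ i ∈ s, 0 ≤ c i) (hμ : Monotone μ)
    (a b : E) :
    k * ‖a - b‖ ^ 2 ≤ ⟪quasiLikelihood s c μ x k a - quasiLikelihood s c μ x k b, a - b⟫ := by
  rw [inner_quasiLikelihood_sub_quasiLikelihood, le_add_iff_nonneg_left]
  refine Finset.sum_nonneg fun i hi => mul_nonneg (hc i hi) ?_
  rcases le_total ⟪x i, a⟫ ⟪x i, b⟫ with h | h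
  · exact mul_nonneg_of_nonpos_of_nonpos (sub_nonpos.2 (hμ h)) (sub_nonpos.2 h)
  · exact mul_nonneg (sub_nonneg.2 (hμ h)) (sub_nonneg.2 h)

theorem quasiLikelihood_injective (hc : ∀ i ∈ s, 0 ≤ c i) (hμ : Monotone μ) (hk : 0 < k) :
    Function.Injective (quasiLikelihood s c μ x k) := by
  intro a b hab
  have h := mul_norm_sub_sq_le_inner_quasiLikelihood_sub (x := x) (k := k) hc hμ a b
  rw [hab, sub_self, inner_zero_left] at h
  have hsq : ‖a - b‖ ^ 2 ≤ 0 := by nlinarith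
  simpa [sub_eq_zero] using le_antisymm hsq (sq_nonneg _)

theorem hasFDerivAt_quasiLikelihoodPotential (hμ : Continuous μ) (θ : E) :
    HasFDerivAt (quasiLikelihoodPotential s c μ x k)
      (innerSL ℝ (quasiLikelihood s c μ x k θ)) θ := by
  have hsum : HasFDerivAt (fun θ => ∑ i ∈ s, c i * ∫ v in (0 : ℝ)..⟪x i, θ⟫, μ v)
      (∑ i ∈ s, c i • μ ⟪x i, θ⟫ • innerSL ℝ (x i)) θ :=
    HasFDerivAt.fun_sum fun i _ =>
      ((hμ.integral_hasStrictDerivAt 0 _).hasDerivAt.comp_hasFDerivAt θ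
        (innerSL ℝ (x i)).hasFDerivAt).const_mul (c i)
  refine (hsum.add ((hasStrictFDerivAt_norm_sq θ).hasFDerivAt.const_mul (k / 2))).congr_fderiv ?_
  ext v
  simp [quasiLikelihood, mul_assoc]
  ring

theorem inner_quasiLikelihood_zero_add_le_potential (hc : ∀ i ∈ s, 0 ≤ c i) (hμc : Continuous μ)
    (hμm : Monotone μ) (θ : E) :
    ⟪quasiLikelihood s c μ x k 0, θ⟫ + k / 2 * ‖θ‖ ^ 2 ≤ quasiLikelihoodPotential s c μ x k θ := by
  simp only [quasiLikelihood, quasiLikelihoodPotential, inner_zero_right, smul_zero, add_zero,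
    sum_inner, real_inner_smul_left, mul_assoc]
  gcongr with i hi
  exacts [hc i hi, mul_le_intervalIntegral_of_monotone hμc hμm _]

theorem quasiLikelihood_surjective [ProperSpace E] (hc : ∀ i ∈ s, 0 ≤ c i) (hμc : Continuous μ)
    (hμm : Monotone μ) (hk : 0 < k) :
    Function.Surjective (quasiLikelihood s c μ x k) := by
  intro y
  have hderiv (θ : E) : HasFDerivAt (fun θ => quasiLikelihoodPotential s c μ x k θ - ⟪y, θ⟫)
      (innerSL ℝ (quasiLikelihood s c μ x k θ - y)) θ := by
    rw [map_sub]
    exact (hasFDerivAt_quasiLikelihoodPotential hμc θ).sub (innerSL ℝ y).hasFDerivAt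
  have hcoer : Tendsto (fun θ => quasiLikelihoodPotential s c μ x k θ - ⟪y, θ⟫)
      (cocompact E) atTop := by
    refine tendsto_cocompact_atTop_of_quadratic_le (half_pos hk)
      (b := ‖quasiLikelihood s c μ x k 0 - y‖) fun θ => ?_
    have := inner_quasiLikelihood_zero_add_le_potential (x := x) (k := k) hc hμc hμm θ
    have := neg_le_of_abs_le (abs_real_inner_le_norm (quasiLikelihood s c μ x k 0 - y) θ)
    rw [inner_sub_left] at this
    linarith
  obtain ⟨θ, hθ⟩ := exists_hasFDerivAt_eq_zero_of_tendsto_cocompact hderiv hcoer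
  refine ⟨θ, sub_eq_zero.1 (norm_eq_zero.1 ?_)⟩
  rw [← innerSL_apply_norm ℝ, hθ, norm_zero]

theorem quasiLikelihood_bijective [ProperSpace E] (hc : ∀ i ∈ s, 0 ≤ c i) (hμc : Continuous μ)
    (hμm : Monotone μ) (hk : 0 < k) :
    Function.Bijective (quasiLikelihood s c μ x k) :=
  ⟨quasiLikelihood_injective hc hμm hk, quasiLikelihood_surjective hc hμc hμm hk⟩

end QuasiLikelihood

theorem gmap_eq_quasiLikelihood {d : ℕ} (t : ℕ) (γ lam cmu : ℝ) (μ : ℝ → ℝ)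
    (x : ℕ → Fin d → ℝ) :
    gmap t γ lam cmu μ x = WithLp.ofLp ∘ quasiLikelihood (Finset.Icc 1 (t - 1))
      (fun s => γ ^ (t - 1 - s)) μ (fun s => WithLp.toLp 2 (x s)) (lam * cmu) ∘ WithLp.toLp 2 := by
  ext θ i
  simp [gmap, quasiLikelihood, EuclideanSpace.inner_eq_star_dotProduct, dotProduct_comm]

theorem stmt_11_general {d t : ℕ}
    (γ lam cmu : ℝ) (hγ : γ ∈ Set.Ioo (0 : ℝ) 1) (hlam : 0 < lam) (hcmu : 0 < cmu)
    (μ : ℝ → ℝ) (hμc : Continuous μ) (hμm : StrictMono μ)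
    (x : ℕ → Fin d → ℝ) :
    Function.Bijective (gmap t γ lam cmu μ x) := by
  have hc : ∀ s ∈ Finset.Icc 1 (t - 1), 0 ≤ γ ^ (t - 1 - s) := fun s _ => pow_nonneg hγ.1.le _
  rw [gmap_eq_quasiLikelihood]
  exact (WithLp.ofLp_bijective 2).comp <|
    (quasiLikelihood_bijective hc hμc hμm.monotone (mul_pos hlam hcmu)).comp
      (WithLp.toLp_bijective 2)

/-- Bijectivity of the quasi-likelihood map. -/
theorem stmt_11 {d t : ℕ} (hd : 1 ≤ d) (ht : 2 ≤ t)
    (γ lam cmu : ℝ) (hγ : γ ∈ Set.Ioo (0 : ℝ) 1) (hlam : 0 < lam) (hcmu : 0 < cmu)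
    (μ : ℝ → ℝ) (hμc : Continuous μ) (hμm : StrictMono μ)
    (x : ℕ → Fin d → ℝ) :
    Function.Bijective (gmap t γ lam cmu μ x) :=
  stmt_11_general γ lam cmu hγ hlam hcmu μ hμc hμm x
end
end
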